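/- Let ε ∈ (0,1/4) and let A be a real random variable on a finite probability space with 𝔼[A^k] ≥ (2ε)^k for some even k and 𝔼[A^t] ≥ 0 for every integer t ≥ 1. Then for all integers p ≥ k/ε, 𝔼[|1+A|^p] ≥ (1+ε)^p. -/

import Mathlib

/-!
Take `q = ⌈k / ε⌉`, so that `k ≤ ε q < k + ε`. Expanding `𝔼[(1 + A)^q]` binomially and keeping
only the (nonnegative) moments of order `0`, `k` and `2k`, together with `𝔼[A^{2k}] ≥ 𝔼[A^k]^2`,
gives `𝔼[(1 + A)^q] ≥ 1 + C(q,k) (2ε)^k + C(q,2k) (2ε)^{2k}`. On the other side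
`(1 + ε)^q ≤ exp (ε q (1 - 3ε/8))`, which is at most `e^k` for `k ≥ 3`, while
`C(q,k) (2ε)^k ≥ ((3k+1)/2)^k / k! ≥ e^k`; for `k = 2` the term of order `2k` is needed too.
Jensen's inequality for `x ↦ x^(p/q)` then passes from `q` to every `p ≥ q`.
-/

open Finset Real Nat

lemma one_add_le_exp_sub_sq {x : ℝ} (hx0 : 0 ≤ x) (hx1 : x ≤ 1 / 4) :
    1 + x ≤ exp (x - 3 * x ^ 2 / 8) := by
  have hquad := quadratic_le_exp_of_nonneg hx0
  have htail : 1 - 3 * x ^ 2 / 8 ≤ exp (-(3 * x ^ 2 / 8)) := by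
    linarith [add_one_le_exp (-(3 * x ^ 2 / 8))]
  have hpos : 0 ≤ 1 - 3 * x ^ 2 / 8 := by nlinarith
  calc 1 + x ≤ (1 + x + x ^ 2 / 2) * (1 - 3 * x ^ 2 / 8) := by
        nlinarith [mul_nonneg hx0 hx0, mul_nonneg (mul_nonneg hx0 hx0) hx0]
    _ ≤ exp x * exp (-(3 * x ^ 2 / 8)) := mul_le_mul hquad htail hpos (exp_pos x).le
    _ = exp (x - 3 * x ^ 2 / 8) := by rw [← exp_add, sub_eq_add_neg]

lemma one_add_pow_le_exp {ε : ℝ} {k q : ℕ} (hε0 : 0 ≤ ε) (hε1 : ε ≤ 1 / 4)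
    (hq : ε * q < k + ε) : (1 + ε) ^ q ≤ exp ((k + ε) * (1 - 3 * ε / 8)) := by
  calc (1 + ε) ^ q ≤ exp (ε - 3 * ε ^ 2 / 8) ^ q :=
        pow_le_pow_left₀ (by linarith) (one_add_le_exp_sub_sq hε0 hε1) q
    _ = exp (ε * q * (1 - 3 * ε / 8)) := by rw [← exp_nat_mul]; ring_nf
    _ ≤ exp ((k + ε) * (1 - 3 * ε / 8)) := by gcongr; linarith

lemma exp_one_pow_mul_factorial_le {k : ℕ} (hk : 3 ≤ k) :
    exp 1 ^ k * k ! ≤ ((3 * k + 1) / 2) ^ k := by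
  have he : exp 1 < 2.7182818286 := exp_one_lt_d9
  induction k, hk using Nat.le_induction with
  | base =>
    have : exp 1 ^ 3 ≤ 2.7182818286 ^ 3 := pow_le_pow_left₀ (exp_pos 1).le he.le 3
    norm_num [Nat.factorial] at this ⊢
    linarith
  | succ n hn ih =>
    set r : ℝ := 1 + 3 / (3 * n + 1) with hr
    have hn0 : (0 : ℝ) < 3 * n + 1 := by positivity
    have hsplit : (3 * ((n + 1 : ℕ) : ℝ) + 1) / 2 = (3 * n + 1) / 2 * r := by
      rw [hr]; field_simp; push_cast; ring
    -- Bernoulli's inequality for `r ^ n` absorbs the extra factor `e (n + 1)`, as `e ≤ 3`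
    have hbern : (6 * n + 1) / (3 * n + 1) ≤ r ^ n := by
      have := one_add_mul_le_pow (show (-2 : ℝ) ≤ 3 / (3 * n + 1) by
        linarith [div_nonneg zero_le_three hn0.le]) n
      calc (6 * n + 1) / (3 * n + 1) = 1 + (n : ℝ) * (3 / (3 * n + 1)) := by field_simp; ring
        _ ≤ r ^ n := this
    have hstep : exp 1 * (n + 1) ≤ (3 * ((n + 1 : ℕ) : ℝ) + 1) / 2 * r ^ n := by
      have hfrac : exp 1 * (n + 1)
          ≤ (3 * ((n + 1 : ℕ) : ℝ) + 1) / 2 * ((6 * n + 1) / (3 * n + 1)) := by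
        rw [mul_div_assoc', le_div_iff₀ (by positivity)]
        have hn3 : (3 : ℝ) ≤ n := by exact_mod_cast hn
        have := mul_le_mul_of_nonneg_right he.le (by positivity : (0 : ℝ) ≤ (n + 1) * (3 * n + 1))
        push_cast
        nlinarith
      exact hfrac.trans (by gcongr)
    calc exp 1 ^ (n + 1) * ((n + 1) ! : ℕ) = exp 1 * (n + 1) * (exp 1 ^ n * n !) := by
          push_cast [Nat.factorial_succ]; ring
      _ ≤ (3 * ((n + 1 : ℕ) : ℝ) + 1) / 2 * r ^ n * ((3 * n + 1) / 2) ^ n := by gcongr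
      _ = ((3 * ((n + 1 : ℕ) : ℝ) + 1) / 2) ^ (n + 1) := by
          rw [hsplit, mul_pow]; ring

lemma pow_div_factorial_le_choose_mul_pow {x : ℝ} (hx : 0 ≤ x) {q t : ℕ} (ht : t ≤ q + 1) :
    (x * (q + 1 - t)) ^ t / t ! ≤ q.choose t * x ^ t := by
  have h := Nat.pow_le_choose (α := ℝ) t q
  push_cast [Nat.cast_sub ht] at h
  rw [mul_pow, mul_div_assoc, mul_comm _ (x ^ t)]
  gcongr

lemma one_add_pow_le_choose_mul_pow {ε : ℝ} {k q : ℕ} (hε0 : 0 ≤ ε) (hε1 : ε ≤ 1 / 4)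
    (hk : 3 ≤ k) (h1 : k ≤ ε * q) (h2 : ε * q < k + ε) :
    (1 + ε) ^ q ≤ q.choose k * (2 * ε) ^ k := by
  have hk3 : (3 : ℝ) ≤ k := by exact_mod_cast hk
  have hkq : k ≤ q + 1 := by
    have : (k : ℝ) ≤ q := by nlinarith
    exact (Nat.cast_le.mp this).trans q.le_succ
  calc (1 + ε) ^ q ≤ exp ((k + ε) * (1 - 3 * ε / 8)) := one_add_pow_le_exp hε0 hε1 h2
    _ ≤ exp k := by gcongr; nlinarith
    _ = exp 1 ^ k := by rw [← exp_nat_mul, mul_one]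
    _ ≤ ((3 * k + 1) / 2) ^ k / k ! := by
        rw [le_div_iff₀ (by positivity)]; exact exp_one_pow_mul_factorial_le hk
    _ ≤ (2 * ε * (q + 1 - k)) ^ k / k ! := by gcongr; nlinarith
    _ ≤ q.choose k * (2 * ε) ^ k := pow_div_factorial_le_choose_mul_pow (by positivity) hkq

lemma one_add_pow_le_choose_two_add_choose_four {ε : ℝ} {q : ℕ} (hε0 : 0 ≤ ε)
    (hε1 : ε ≤ 1 / 4) (h1 : 2 ≤ ε * q) (h2 : ε * q < 2 + ε) :
    (1 + ε) ^ q ≤ 1 + q.choose 2 * (2 * ε) ^ 2 + q.choose 4 * (2 * ε) ^ 4 := by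
  have hq : (4 : ℝ) ≤ q + 1 := by nlinarith
  have he : exp 1 < 2.7182818286 := exp_one_lt_d9
  have he' : exp (1 / 16) ≤ 16 / 15 := by
    have := exp_bound_div_one_sub_of_interval (x := 1 / 16) (by norm_num) (by norm_num)
    norm_num at this ⊢; exact this
  have hchoose2 := pow_div_factorial_le_choose_mul_pow (x := 2 * ε) (by positivity)
    (show 2 ≤ q + 1 by exact_mod_cast (show (2 : ℝ) ≤ q + 1 by linarith))
  have hchoose4 := pow_div_factorial_le_choose_mul_pow (x := 2 * ε) (by positivity)
    (show 4 ≤ q + 1 by exact_mod_cast hq)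
  have hb2 : (7 / 2) ^ 2 / 2 ≤ (2 * ε * (q + 1 - 2)) ^ 2 / 2 := by gcongr; nlinarith
  have hb4 : (5 / 2) ^ 4 / 24 ≤ (2 * ε * (q + 1 - 4)) ^ 4 / 24 := by gcongr; nlinarith
  norm_num [Nat.factorial] at hchoose2 hchoose4
  calc (1 + ε) ^ q ≤ exp ((2 + ε) * (1 - 3 * ε / 8)) :=
        one_add_pow_le_exp hε0 hε1 (by exact_mod_cast h2)
    _ ≤ exp (1 + 1 + 1 / 16) := by gcongr; nlinarith
    _ = exp 1 * exp 1 * exp (1 / 16) := by rw [exp_add, exp_add]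
    _ ≤ 2.7182818286 * 2.7182818286 * (16 / 15) := by gcongr
    _ ≤ 1 + (7 / 2) ^ 2 / 2 + (5 / 2) ^ 4 / 24 := by norm_num
    _ ≤ 1 + q.choose 2 * (2 * ε) ^ 2 + q.choose 4 * (2 * ε) ^ 4 := by linarith

lemma one_add_pow_le_binomial_terms {ε : ℝ} {k q : ℕ} (hε0 : 0 ≤ ε) (hε1 : ε ≤ 1 / 4)
    (hk : 2 ≤ k) (h1 : k ≤ ε * q) (h2 : ε * q < k + ε) :
    (1 + ε) ^ q ≤ 1 + q.choose k * (2 * ε) ^ k + q.choose (2 * k) * ((2 * ε) ^ k) ^ 2 := by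
  rcases hk.eq_or_lt with rfl | hk
  · rw [← pow_mul]
    exact one_add_pow_le_choose_two_add_choose_four hε0 hε1 (by exact_mod_cast h1)
      (by exact_mod_cast h2)
  · have hmain := one_add_pow_le_choose_mul_pow hε0 hε1 hk h1 h2
    have hrest : 0 ≤ (q.choose (2 * k) : ℝ) * ((2 * ε) ^ k) ^ 2 := by positivity
    linarith

lemma mul_natCeil_div_mem_Ico {a b : ℝ} (ha : 0 ≤ a) (hb : 0 < b) :
    b * ⌈a / b⌉₊ ∈ Set.Ico a (a + b) := by
  constructor
  · rw [mul_comm, ← div_le_iff₀ hb]; exact Nat.le_ceil _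
  · have := mul_lt_mul_of_pos_left (Nat.ceil_lt_add_one (div_nonneg ha hb.le)) hb
    rwa [mul_add, mul_div_cancel₀ _ hb.ne', mul_one] at this

section WeightedSums

variable {ι : Type*} (s : Finset ι) (w : ι → ℝ)

lemma sum_mul_one_add_pow (X : ι → ℝ) (n : ℕ) :
    ∑ i ∈ s, w i * (1 + X i) ^ n = ∑ t ∈ range (n + 1), n.choose t * ∑ i ∈ s, w i * X i ^ t := by
  simp_rw [add_comm (1 : ℝ), add_pow, one_pow, mul_one, mul_sum]
  rw [sum_comm]
  exact sum_congr rfl fun _ _ => sum_congr rfl fun _ _ => by ring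

lemma le_sum_mul_one_add_pow (hw0 : ∀ i ∈ s, 0 ≤ w i) (hw1 : ∑ i ∈ s, w i = 1) {X : ι → ℝ}
    (hX : ∀ t, 1 ≤ t → 0 ≤ ∑ i ∈ s, w i * X i ^ t) {k n : ℕ} (hk : 0 < k) (hkn : 2 * k ≤ n) :
    1 + n.choose k * ∑ i ∈ s, w i * X i ^ k + n.choose (2 * k) * (∑ i ∈ s, w i * X i ^ k) ^ 2
      ≤ ∑ i ∈ s, w i * (1 + X i) ^ n := by
  have hsq : (∑ i ∈ s, w i * X i ^ k) ^ 2 ≤ ∑ i ∈ s, w i * X i ^ (2 * k) := by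
    simpa only [← pow_mul, mul_comm k 2] using
      Real.pow_arith_mean_le_arith_mean_pow_of_even s w (fun i => X i ^ k) hw0 hw1 even_two
  have hsub : {0, k, 2 * k} ⊆ range (n + 1) := by
    intro t ht
    simp only [mem_insert, mem_singleton] at ht
    rcases ht with rfl | rfl | rfl <;> rw [mem_range] <;> omega
  rw [sum_mul_one_add_pow]
  calc _ ≤ ∑ t ∈ {0, k, 2 * k}, n.choose t * ∑ i ∈ s, w i * X i ^ t := by
        rw [sum_insert (by simp only [mem_insert, mem_singleton]; omega),
          sum_insert (by simp only [mem_singleton]; omega), sum_singleton]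
        simp only [Nat.choose_zero_right, pow_zero, mul_one, hw1, Nat.cast_one, ← add_assoc]
        gcongr
    _ ≤ _ := sum_le_sum_of_subset_of_nonneg hsub fun t _ _ => by
        rcases t.eq_zero_or_pos with rfl | ht
        · simp [hw1]
        · exact mul_nonneg (Nat.cast_nonneg _) (hX t ht)

lemma pow_le_sum_mul_pow_of_le (hw0 : ∀ i ∈ s, 0 ≤ w i) (hw1 : ∑ i ∈ s, w i = 1) {z : ι → ℝ}
    (hz : ∀ i ∈ s, 0 ≤ z i) {c : ℝ} (hc : 0 ≤ c) {q p : ℕ} (hq : q ≠ 0) (hqp : q ≤ p)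
    (h : c ^ q ≤ ∑ i ∈ s, w i * z i ^ q) : c ^ p ≤ ∑ i ∈ s, w i * z i ^ p := by
  have hpow : ∀ x : ℝ, 0 ≤ x → (x ^ q) ^ ((p : ℝ) / q) = x ^ p := fun x hx => by
    rw [← rpow_natCast x q, ← rpow_mul hx, mul_div_cancel₀ _ (Nat.cast_ne_zero.mpr hq),
      rpow_natCast]
  have hexp : 1 ≤ (p : ℝ) / q := by
    rw [one_le_div (Nat.cast_pos.mpr (Nat.pos_of_ne_zero hq))]; exact_mod_cast hqp
  calc c ^ p = (c ^ q) ^ ((p : ℝ) / q) := (hpow c hc).symm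
    _ ≤ (∑ i ∈ s, w i * z i ^ q) ^ ((p : ℝ) / q) := by gcongr
    _ ≤ ∑ i ∈ s, w i * (z i ^ q) ^ ((p : ℝ) / q) :=
        Real.rpow_arith_mean_le_arith_mean_rpow s w _ hw0 hw1 (fun i hi => pow_nonneg (hz i hi) q)
          hexp
    _ = ∑ i ∈ s, w i * z i ^ p := sum_congr rfl fun i hi => by rw [hpow _ (hz i hi)]

end WeightedSums

theorem moment_lower_bound_from_spectral_positivity {Ω : Type*} [Fintype Ω]
    (μ : Ω → ℝ) (hμ0 : ∀ ω, 0 ≤ μ ω) (hμ1 : ∑ ω, μ ω = 1)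
    (A : Ω → ℝ) (ε : ℝ) (hε : ε ∈ Set.Ioo (0 : ℝ) (1 / 4))
    (k : ℕ) (hk : 0 < k) (hkeven : Even k)
    (hAk : ∑ ω, μ ω * A ω ^ k ≥ (2 * ε) ^ k)
    (hAt : ∀ t : ℕ, 1 ≤ t → 0 ≤ ∑ ω, μ ω * A ω ^ t) :
    ∀ p : ℕ, (p : ℝ) ≥ k / ε → ∑ ω, μ ω * |1 + A ω| ^ p ≥ (1 + ε) ^ p := by
  obtain ⟨hε0, hε1⟩ := hε
  intro p hp
  obtain ⟨hq1, hq2⟩ := mul_natCeil_div_mem_Ico (Nat.cast_nonneg k) hε0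
  set q := ⌈(k : ℝ) / ε⌉₊
  have hk2 : 2 ≤ k := by obtain ⟨m, rfl⟩ := hkeven; omega
  have hkq : 2 * k ≤ q := by exact_mod_cast (by nlinarith : (2 * k : ℝ) ≤ q)
  refine pow_le_sum_mul_pow_of_le univ μ (fun ω _ => hμ0 ω) hμ1 (fun ω _ => abs_nonneg _)
    (by linarith) (by omega) (Nat.ceil_le.mpr hp) ?_
  calc (1 + ε) ^ q ≤ 1 + q.choose k * (2 * ε) ^ k + q.choose (2 * k) * ((2 * ε) ^ k) ^ 2 :=
        one_add_pow_le_binomial_terms hε0.le hε1.le hk2 hq1 hq2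
    _ ≤ 1 + q.choose k * ∑ ω, μ ω * A ω ^ k + q.choose (2 * k) * (∑ ω, μ ω * A ω ^ k) ^ 2 := by
        gcongr
    _ ≤ ∑ ω, μ ω * (1 + A ω) ^ q := le_sum_mul_one_add_pow univ μ (fun ω _ => hμ0 ω) hμ1 hAt hk hkq
    _ ≤ ∑ ω, μ ω * |1 + A ω| ^ q := sum_le_sum fun ω _ => mul_le_mul_of_nonneg_left
        ((le_abs_self _).trans_eq (abs_pow _ _)) (hμ0 ω)
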